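/- For integers i, j ≥ 1, define g_{ij} as follows: set n = 7i − j; if n < 0 put g_{ij} = +∞; if n ≥ 0 and n ≡ 1 or 3 (mod 5) put g_{ij} = n/12 − (⌊n/5⌋ − 1)/4; if n ≥ 0 and n ≡ 0, 2, or 4 (mod 5) put g_{ij} = n/12 − ⌊n/5⌋/4. Then for all i, j ≥ 1 one has g_{ij} ≥ (7i − j)/30, and consequently the quantity D_{ij} := g_{ij} − (5/12 + (i−j)/12) satisfies D_{ij} > 1/2 whenever max(i, j) > 12. Moreover D_{ij} ≥ 1/12 for all i, j ≥ 1 except D_{1,2} = −1/6. -/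

import Mathlib

/-!
STATEMENT 7: For `i, j ≥ 1` put `n = 7i − j` and define `g_{ij} ∈ ℝ ∪ {+∞}` by:
`g_{ij} = +∞` if `n < 0`; `g_{ij} = n/12 − (⌊n/5⌋ − 1)/4` if `n ≥ 0`, `n ≡ 1, 3 (mod 5)`;
`g_{ij} = n/12 − ⌊n/5⌋/4` if `n ≥ 0`, `n ≡ 0, 2, 4 (mod 5)`.  Then
`g_{ij} ≥ (7i − j)/30`; consequently `D_{ij} := g_{ij} − (5/12 + (i−j)/12)` satisfies
`D_{ij} > 1/2` whenever `max(i,j) > 12`; and `D_{ij} ≥ 1/12` for all `i, j ≥ 1` except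
`D_{1,2} = −1/6`.
-/

/-- The lower bound `g_{ij}` for `ord_7 G_{7i−j}` for the polynomial `x⁵ + c·x²`. -/
noncomputable def g7 (i j : ℕ) : WithTop ℝ :=
  let n : ℤ := 7 * i - j
  if n < 0 then ⊤
  else if n % 5 = 1 ∨ n % 5 = 3 then
    (((n : ℝ) / 12 - (((n / 5 : ℤ) : ℝ) - 1) / 4 : ℝ) : WithTop ℝ)
  else (((n : ℝ) / 12 - ((n / 5 : ℤ) : ℝ) / 4 : ℝ) : WithTop ℝ)

/-- The defect matrix `D_{ij} = g_{ij} − (5/12 + (i−j)/12)` (subtraction of a real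
constant written as addition of its negative, so `⊤` entries stay `⊤`). -/
noncomputable def D7 (i j : ℕ) : WithTop ℝ :=
  g7 i j + ((-(5 / 12 + ((i : ℝ) - (j : ℝ)) / 12) : ℝ) : WithTop ℝ)

/-!
Since `⌊n/5⌋ ≤ n/5`, both branches of `g_{ij}` are at least `n/12 − n/20 = n/30`. Subtracting
`5/12 + (i−j)/12` gives `D_{ij} ≥ (3(3i+j) − 25)/60`, which exceeds `1/2` once `3i+j ≥ 19` and is
at least `1/12` once `3i+j ≥ 10`. If `max(i,j) > 12` then either `3i+j ≥ 19` or `j > 7i`, where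
`D_{ij} = +∞`; the finitely many pairs with `3i+j < 10` are computed directly.
-/

lemma g7_eq_top_of_lt {i j : ℕ} (h : 7 * i < j) : g7 i j = ⊤ :=
  if_pos (by omega)

lemma D7_eq_top_of_lt {i j : ℕ} (h : 7 * i < j) : D7 i j = ⊤ := by
  rw [D7, g7_eq_top_of_lt h, top_add]

lemma le_g7 (i j : ℕ) : ((((7 * i - j : ℤ) : ℝ) / 30 : ℝ) : WithTop ℝ) ≤ g7 i j := by
  unfold g7
  dsimp only
  set n : ℤ := 7 * i - j
  have hfloor : ((n / 5 : ℤ) : ℝ) * 5 ≤ n := by exact_mod_cast Int.ediv_mul_le n (by norm_num)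
  split_ifs
  · exact le_top
  · exact WithTop.coe_le_coe.mpr (by linarith)
  · exact WithTop.coe_le_coe.mpr (by linarith)

lemma le_D7 (i j : ℕ) : (((3 * (3 * i + j) - 25) / 60 : ℝ) : WithTop ℝ) ≤ D7 i j :=
  calc (((3 * (3 * i + j) - 25) / 60 : ℝ) : WithTop ℝ)
      = ((((7 * i - j : ℤ) : ℝ) / 30 : ℝ) : WithTop ℝ)
          + ((-(5 / 12 + ((i : ℝ) - (j : ℝ)) / 12) : ℝ) : WithTop ℝ) := by
        rw [← WithTop.coe_add, WithTop.coe_inj]; push_cast; ring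
    _ ≤ D7 i j := add_le_add_left (le_g7 i j) _

lemma D7_one_two : D7 1 2 = (((-(1 / 6) : ℝ)) : WithTop ℝ) := by
  norm_num [D7, g7, ← WithTop.LinearOrderedAddCommGroup.coe_neg, ← WithTop.coe_add]

lemma one_twelfth_le_D7_of_lt_ten {i j : ℕ} (hi : 1 ≤ i) (hj : 1 ≤ j) (hsmall : 3 * i + j < 10)
    (hne : ¬(i = 1 ∧ j = 2)) : (((1 / 12 : ℝ)) : WithTop ℝ) ≤ D7 i j := by
  obtain ⟨hi2, hj6⟩ : i ≤ 2 ∧ j ≤ 6 := by omega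
  interval_cases i <;> interval_cases j <;>
    first
      | omega
      | norm_num [D7, g7, ← WithTop.LinearOrderedAddCommGroup.coe_neg, ← WithTop.coe_add]

theorem g7_bounds :
    (∀ i j : ℕ, 1 ≤ i → 1 ≤ j →
      ((((7 * i - j : ℤ) : ℝ) / 30 : ℝ) : WithTop ℝ) ≤ g7 i j) ∧
    (∀ i j : ℕ, 1 ≤ i → 1 ≤ j → 12 < max i j →
      (((1 / 2 : ℝ)) : WithTop ℝ) < D7 i j) ∧
    (∀ i j : ℕ, 1 ≤ i → 1 ≤ j → ¬(i = 1 ∧ j = 2) →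
      (((1 / 12 : ℝ)) : WithTop ℝ) ≤ D7 i j) ∧
    D7 1 2 = (((-(1 / 6) : ℝ)) : WithTop ℝ) := by
  refine ⟨fun i j _ _ => le_g7 i j, ?_, ?_, D7_one_two⟩
  · intro i j hi hj hmax
    rcases lt_or_ge (7 * i) j with hinf | hfin
    · rw [D7_eq_top_of_lt hinf]
      exact WithTop.coe_lt_top _
    · have h19 : (19 : ℝ) ≤ 3 * i + j := by exact_mod_cast (by omega : 19 ≤ 3 * i + j)
      exact (WithTop.coe_lt_coe.mpr (by linarith)).trans_le (le_D7 i j)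
  · intro i j hi hj hne
    rcases lt_or_ge (3 * i + j) 10 with hsmall | hlarge
    · exact one_twelfth_le_D7_of_lt_ten hi hj hsmall hne
    · have h10 : (10 : ℝ) ≤ 3 * i + j := by exact_mod_cast hlarge
      exact (WithTop.coe_le_coe.mpr (by linarith)).trans (le_D7 i j)
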